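/- arXiv:2311.17778 — 3 statements merged into one kernel-verified Lean document; each statement's English description precedes it below -/
import Mathlib

section
/- For distinct y₁, y₂ ∈ [k-1], the (k-1)×(k-1) permutation matrix of the transposition swapping y₁ and y₂ equals ρ_{y₁} ρ_{y₂} ρ_{y₁}. -/
open Matrix

/-- The matrix label code matrix `ρ_y` for `y ∈ [k-1]` (here `k-1 = n`): the identity
with its `y`-th column replaced by the all-`(-1)`'s vector. -/
def rhoSmall (n : ℕ) (y : Fin n) : Matrix (Fin n) (Fin n) ℝ :=
  Matrix.of fun i j => if j = y then -1 else if i = j then 1 else 0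

/-- The permutation matrix `S_σ`, acting by `(S_σ v)_j = v_{σ(j)}`. -/
def permMat {m : ℕ} (σ : Equiv.Perm (Fin m)) : Matrix (Fin m) (Fin m) ℝ :=
  Matrix.of fun i j => if σ i = j then 1 else 0

lemma mul_rho (n : ℕ) (y : Fin n) (M : Matrix (Fin n) (Fin n) ℝ) (i j : Fin n) :
    (M * rhoSmall n y) i j = if j = y then -∑ l, M i l else M i j := by
  rw [Matrix.mul_apply]
  by_cases hj : j = y
  · simp [rhoSmall, hj]
  · simp [rhoSmall, hj, mul_ite, Finset.sum_ite_eq']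

lemma rho_rowsum (n : ℕ) (y : Fin n) (i : Fin n) :
    ∑ l, rhoSmall n y i l = if i = y then -1 else 0 := by
  by_cases hi : i = y
  · simp [rhoSmall, hi]
    rw [Finset.sum_eq_single y] <;> simp +contextual [hi, eq_comm]
  · simp [rhoSmall, hi]
    rw [Finset.sum_eq_add_of_mem y i (by simp) (by simp) (Ne.symm hi)
      (by rintro c _ ⟨hc1, hc2⟩; simp [hc1, Ne.symm hc2])]
    simp [hi, Ne.symm hi]

lemma mul_rho_rowsum (n : ℕ) (y : Fin n) (M : Matrix (Fin n) (Fin n) ℝ) (i : Fin n) :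
    ∑ j, (M * rhoSmall n y) i j = -M i y := by
  simp_rw [mul_rho]
  rw [← Finset.add_sum_erase _ _ (Finset.mem_univ y)]
  rw [Finset.sum_congr rfl (fun j hj => if_neg (Finset.ne_of_mem_erase hj)),
    Finset.sum_erase_eq_sub (Finset.mem_univ y)]
  simp; ring

/-- For distinct `y₁, y₂ ∈ [k-1]`, the `(k-1)×(k-1)` permutation matrix of the
transposition swapping `y₁` and `y₂` equals `ρ_{y₁} ρ_{y₂} ρ_{y₁}`. -/
theorem transposition_eq_rho_product (n : ℕ) (y₁ y₂ : Fin n) (h : y₁ ≠ y₂) :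
    permMat (Equiv.swap y₁ y₂) = rhoSmall n y₁ * rhoSmall n y₂ * rhoSmall n y₁ := by
  ext i j
  rw [mul_rho, mul_rho, mul_rho_rowsum, rho_rowsum]
  simp only [permMat, rhoSmall, Matrix.of_apply, Equiv.swap_apply_def]
  by_cases h1 : i = y₁ <;> by_cases h2 : i = y₂ <;>
    by_cases h3 : j = y₁ <;> by_cases h4 : j = y₂ <;>
    simp_all [h.symm, Ne.symm h] <;> simp [Ne.symm h3, Ne.symm h4]
end

section
/- A multiclass loss function L : ℝ^k → ℝ^k is both permutation equivariant and relative-margin-based (i.e., a PERM loss) if and only if there exists a symmetric function ψ : ℝ^{k-1} → ℝ such that L_y(v) = ψ(ρ_y D v) for all v ∈ ℝ^k and y ∈ [k]; moreover this ψ is unique (equal to the template L_k restricted via D). -/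
open Matrix

/- Convention: the label set `[k]` (`k = n+1`) is modeled by `Fin (n+1)` with index `0`
playing the role of the class `k`. -/

/-- The matrix label code `ρ_y` for `y ∈ [k]`: `ρ_k = I` (here `y = 0`), and for
`y ∈ [k-1]` it is the identity with the corresponding column replaced by `-𝟙`. -/
def rho (n : ℕ) (y : Fin (n + 1)) : Matrix (Fin n) (Fin n) ℝ :=
  Matrix.of fun i j => if j.succ = y then -1 else if i = j then 1 else 0

/-- The matrix `D = [−I_{k-1} | 𝟙]`, so that `(D v)_j = v_k − v_j`. -/
def Dmat (n : ℕ) : Matrix (Fin n) (Fin (n + 1)) ℝ :=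
  Matrix.of fun i j => if j = 0 then 1 else if j = i.succ then -1 else 0

lemma dmat_mulVec (n : ℕ) (v : Fin (n+1) → ℝ) (i : Fin n) :
    (Dmat n).mulVec v i = v 0 - v i.succ := by
  simp [Dmat, Matrix.mulVec, dotProduct, Fin.sum_univ_succ, ite_mul,
    Fin.succ_ne_zero, Finset.sum_ite_eq, Fin.succ_inj, eq_comm, sub_eq_add_neg]

lemma rho_zero_mulVec (n : ℕ) (w : Fin n → ℝ) :
    (rho n 0).mulVec w = w := by
  funext i
  simp [rho, Matrix.mulVec, dotProduct, Fin.succ_ne_zero, ite_mul,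
    Finset.sum_ite_eq]

lemma rho_succ_mulVec (n : ℕ) (m : Fin n) (w : Fin n → ℝ) (i : Fin n) :
    (rho n m.succ).mulVec w i = (if i = m then 0 else w i) - w m := by
  classical
  have key : ∀ j, (rho n m.succ) i j * w j
      = -(if j = m then w j else 0) + (if j = i then (if i = m then 0 else w i) else 0) := by
    intro j
    by_cases h1 : j = m <;> by_cases h2 : j = i <;>
      simp [rho, h1, h2, Fin.succ_inj, eq_comm] <;> simp_all [eq_comm]
  simp only [Matrix.mulVec, dotProduct]
  rw [Finset.sum_congr rfl (fun j _ => key j), Finset.sum_add_distrib]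
  simp [Finset.sum_ite_eq', sub_eq_neg_add]

/-- Key identity: `ρ_y D v = D (v ∘ swap 0 y)`. -/
lemma rho_dmat_swap (n : ℕ) (y : Fin (n+1)) (v : Fin (n+1) → ℝ) :
    (rho n y).mulVec ((Dmat n).mulVec v)
      = (Dmat n).mulVec (fun j => v (Equiv.swap 0 y j)) := by
  cases y using Fin.cases with
  | zero =>
      rw [rho_zero_mulVec]
      simp
  | succ m =>
      funext i
      rw [rho_succ_mulVec, dmat_mulVec, dmat_mulVec, dmat_mulVec,
        Equiv.swap_apply_left]
      rcases eq_or_ne i m with rfl | h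
      · rw [if_pos rfl, Equiv.swap_apply_right]
        ring
      · rw [if_neg h, Equiv.swap_apply_of_ne_of_ne (Fin.succ_ne_zero i)
          (by simpa [Fin.succ_inj] using h)]
        ring

/-- Restrict a permutation of `Fin (n+1)` fixing `0` to a permutation of `Fin n`. -/
def shrinkPerm {n : ℕ} (σ : Equiv.Perm (Fin (n+1))) (h : σ 0 = 0) : Equiv.Perm (Fin n) where
  toFun i := (σ i.succ).pred (fun hc => Fin.succ_ne_zero i (σ.injective (hc.trans h.symm)))
  invFun i := (σ.symm i.succ).pred (fun hc => Fin.succ_ne_zero i (by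
    have := congrArg σ hc
    simpa [h] using this))
  left_inv := by
    intro i
    simp only [Fin.succ_pred, Equiv.symm_apply_apply, Fin.pred_succ]
  right_inv := by
    intro i
    simp only [Fin.succ_pred, Equiv.apply_symm_apply, Fin.pred_succ]

lemma shrinkPerm_succ {n : ℕ} (σ : Equiv.Perm (Fin (n+1))) (h : σ 0 = 0) (i : Fin n) :
    ((shrinkPerm σ h) i).succ = σ i.succ := by
  simp [shrinkPerm]

lemma dmat_mulVec_comp_fix {n : ℕ} (σ : Equiv.Perm (Fin (n+1))) (h : σ 0 = 0)
    (w : Fin (n+1) → ℝ) :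
    (Dmat n).mulVec (fun j => w (σ j)) = fun i => (Dmat n).mulVec w (shrinkPerm σ h i) := by
  funext i
  rw [dmat_mulVec, dmat_mulVec, h, ← shrinkPerm_succ σ h]

/-- Lift a permutation of `Fin n` to one of `Fin (n+1)` fixing `0`. -/
def liftPerm {n : ℕ} (π : Equiv.Perm (Fin n)) : Equiv.Perm (Fin (n+1)) where
  toFun := Fin.cases 0 (fun i => (π i).succ)
  invFun := Fin.cases 0 (fun i => (π.symm i).succ)
  left_inv := by
    intro j
    cases j using Fin.cases <;> simp
  right_inv := by
    intro j
    cases j using Fin.cases <;> simp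

/-- A multiclass loss `L : ℝ^k → ℝ^k` is permutation equivariant and relative-margin-based
(a PERM loss) iff there is a (unique) symmetric template `ψ : ℝ^{k-1} → ℝ` with
`L_y(v) = ψ(ρ_y D v)` for all `v` and `y`. -/
theorem perm_loss_iff_relative_margin_form (n : ℕ)
    (L : (Fin (n + 1) → ℝ) → Fin (n + 1) → ℝ) :
    ((∀ (σ : Equiv.Perm (Fin (n + 1))) (v : Fin (n + 1) → ℝ),
        L (fun i => v (σ i)) = fun i => L v (σ i)) ∧
      (∀ y : Fin (n + 1), ∃ ℓ : (Fin n → ℝ) → ℝ, ∀ v, L v y = ℓ ((Dmat n).mulVec v)))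
    ↔ ∃! ψ : (Fin n → ℝ) → ℝ,
        (∀ (σ : Equiv.Perm (Fin n)) (z : Fin n → ℝ), ψ (fun i => z (σ i)) = ψ z) ∧
        (∀ (v : Fin (n + 1) → ℝ) (y : Fin (n + 1)),
          L v y = ψ ((rho n y).mulVec ((Dmat n).mulVec v))) := by
  -- the section `vz` of `D`
  set vz : (Fin n → ℝ) → (Fin (n+1) → ℝ) := fun z => Fin.cases 0 (fun i => -z i) with hvz
  have hDvz : ∀ z : Fin n → ℝ, (Dmat n).mulVec (vz z) = z := by
    intro z
    funext i
    rw [dmat_mulVec]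
    simp [hvz]
  constructor
  · rintro ⟨hEq, hM⟩
    refine ⟨fun z => L (vz z) 0, ⟨?_, ?_⟩, ?_⟩
    · -- symmetry
      intro π z
      have hv : vz (fun i => z (π i)) = fun j => vz z (liftPerm π j) := by
        funext j
        cases j using Fin.cases with
        | zero => simp [hvz, liftPerm]
        | succ i => simp [hvz, liftPerm]
      show L (vz fun i => z (π i)) 0 = L (vz z) 0
      rw [hv]
      have h2 := congrFun (hEq (liftPerm π) (vz z)) 0
      simpa [liftPerm] using h2
    · -- representation
      intro v y
      -- first: L v 0 = ψ (D v)
      have h0 : ∀ v : Fin (n+1) → ℝ, L v 0 = L (vz ((Dmat n).mulVec v)) 0 := by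
        intro v
        obtain ⟨ℓ, hℓ⟩ := hM 0
        rw [hℓ, hℓ, hDvz]
      show L v y = L (vz ((rho n y).mulVec ((Dmat n).mulVec v))) 0
      rw [rho_dmat_swap, ← h0]
      have h2 := congrFun (hEq (Equiv.swap 0 y) v) 0
      rw [Equiv.swap_apply_left] at h2
      exact h2.symm
    · -- uniqueness
      intro ψ' ⟨_, hrep⟩
      funext z
      have := hrep (vz z) 0
      rw [rho_zero_mulVec, hDvz] at this
      exact this.symm
  · rintro ⟨ψ, ⟨hsym, hrep⟩, _⟩
    constructor
    · intro σ v
      funext i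
      rw [hrep, hrep v (σ i), rho_dmat_swap, rho_dmat_swap]
      -- δ := swap 0 (σ i) ⁻¹ ∘ (σ ∘ swap 0 i) fixes 0
      set τ : Equiv.Perm (Fin (n+1)) := (Equiv.swap 0 i).trans σ with hτ
      set ν : Equiv.Perm (Fin (n+1)) := Equiv.swap 0 (σ i) with hν
      set δ : Equiv.Perm (Fin (n+1)) := τ.trans ν.symm with hδ
      have hδ0 : δ 0 = 0 := by
        simp [hδ, hτ, hν]
      have hcomp : (fun j => (fun k => v (σ k)) (Equiv.swap 0 i j))
          = fun j => (fun k => v (ν k)) (δ j) := by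
        funext j
        simp [hδ, hτ, hν]
      rw [hcomp, dmat_mulVec_comp_fix δ hδ0 (fun k => v (ν k))]
      exact hsym (shrinkPerm δ hδ0) _
    · intro y
      exact ⟨fun z => ψ ((rho n y).mulVec z), fun v => hrep v y⟩
end

section
/- Let ψ be the template of the multinomial cross entropy, ψ(z) = log(1 + Σ_{j=1}^{k-1} exp(−z_j)). If a ∈ ℝ^{k-1} satisfies ψ(t a) = ψ(t e₁) for all t ∈ ℝ, then a = e_i for some i ∈ [k-1]. -/
/-- The template of the multinomial cross entropy on `ℝ^{k-1}` (here `k-1 = m+1 ≥ 1`):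
`ψ(z) = log(1 + Σ_j exp(−z_j))`. -/
noncomputable def crossEntropyTemplate (m : ℕ) (z : Fin (m + 1) → ℝ) : ℝ :=
  Real.log (1 + ∑ j, Real.exp (-z j))

/-- If `a ∈ ℝ^{k-1}` satisfies `ψ(t a) = ψ(t e₁)` for all `t ∈ ℝ`, where `ψ` is the
cross-entropy template, then `a = e_i` for some `i ∈ [k-1]`. -/
theorem cross_entropy_template_ray (m : ℕ) (a : Fin (m + 1) → ℝ)
    (h : ∀ t : ℝ,
      crossEntropyTemplate m (fun j => t * a j) =
        crossEntropyTemplate m (fun j => t * (if j = 0 then 1 else 0))) :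
    ∃ i : Fin (m + 1), a = fun j => if j = i then 1 else 0 := by
  -- Step 1: cancel logs
  have key : ∀ t : ℝ, ∑ j, Real.exp (-(a j) * t) = Real.exp (-t) + m := by
    intro t
    have h1 := h t
    unfold crossEntropyTemplate at h1
    have pos1 : (0:ℝ) < 1 + ∑ j, Real.exp (-(t * a j)) := by positivity
    have pos2 : (0:ℝ) < 1 + ∑ j : Fin (m+1),
        Real.exp (-(t * (if j = 0 then 1 else 0))) := by positivity
    have h2 : 1 + ∑ j, Real.exp (-(t * a j))
        = 1 + ∑ j : Fin (m+1), Real.exp (-(t * (if j = 0 then 1 else 0))) := by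
      rw [← Real.exp_log pos1, ← Real.exp_log pos2, h1]
    have h3 : ∑ j, Real.exp (-(t * a j))
        = ∑ j : Fin (m+1), Real.exp (-(t * (if j = 0 then 1 else 0))) := by
      linarith
    have h4 : ∑ j : Fin (m+1), Real.exp (-(t * (if j = 0 then 1 else 0)))
        = Real.exp (-t) + m := by
      rw [Fin.sum_univ_succ]
      simp [Fin.succ_ne_zero]
    rw [← h4]
    rw [← h3]
    congr 1
    ext j
    ring_nf
  -- Step 2: power sums via derivatives
  have pow : ∀ n : ℕ, ∀ t : ℝ, ∑ j, (-(a j))^n * Real.exp (-(a j) * t)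
      = (-1:ℝ)^n * Real.exp (-t) + (if n = 0 then (m:ℝ) else 0) := by
    intro n
    induction n with
    | zero => intro t; simpa using key t
    | succ n ih =>
      intro t
      have hF : HasDerivAt (fun t => ∑ j, (-(a j))^n * Real.exp (-(a j) * t))
          (∑ j, (-(a j))^(n+1) * Real.exp (-(a j) * t)) t := by
        have hj : ∀ j : Fin (m+1), HasDerivAt (fun t => (-(a j))^n * Real.exp (-(a j) * t))
            ((-(a j))^(n+1) * Real.exp (-(a j) * t)) t := by
          intro j
          have h1 : HasDerivAt (fun t : ℝ => -(a j) * t) (-(a j)) t := by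
            simpa using (hasDerivAt_id t).const_mul (-(a j))
          have h2 := (h1.exp).const_mul ((-(a j))^n)
          refine h2.congr_deriv ?_
          ring
        simpa using HasDerivAt.fun_sum (fun j _ => hj j)
      have hG : HasDerivAt (fun t => (-1:ℝ)^n * Real.exp (-t) + (if n = 0 then (m:ℝ) else 0))
          ((-1:ℝ)^(n+1) * Real.exp (-t)) t := by
        have h1 : HasDerivAt (fun t : ℝ => -t) (-1) t := by
          exact (hasDerivAt_id' t).neg
        have h2 := (h1.exp).const_mul ((-1:ℝ)^n)
        have h3 := h2.add_const (if n = 0 then (m:ℝ) else 0)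
        refine h3.congr_deriv ?_
        ring
      have heq : (fun t => ∑ j, (-(a j))^n * Real.exp (-(a j) * t))
          = (fun t => (-1:ℝ)^n * Real.exp (-t) + (if n = 0 then (m:ℝ) else 0)) :=
        funext ih
      have hd : ∑ j, (-(a j))^(n+1) * Real.exp (-(a j) * t)
          = (-1:ℝ)^(n+1) * Real.exp (-t) := by
        rw [← hF.deriv, heq, hG.deriv]
      simpa [neg_mul] using hd
  -- Step 3: power sums at 0
  have psum : ∀ n : ℕ, n ≠ 0 → ∑ j, (a j)^n = 1 := by
    intro n hn
    have h0 := pow n 0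
    simp only [mul_zero, neg_zero, Real.exp_zero, mul_one, if_neg hn, add_zero] at h0
    have h1 : ∑ j, (-(a j))^n = ∑ j, (-1:ℝ)^n * (a j)^n := by
      apply Finset.sum_congr rfl
      intro j _
      rw [neg_pow]
    rw [h1, ← Finset.mul_sum] at h0
    have hne : ((-1:ℝ)^n) ≠ 0 := by
      simp
    field_simp at h0
    exact h0
  have p1 := psum 1 (by norm_num)
  have p2 := psum 2 (by norm_num)
  have p3 := psum 3 (by norm_num)
  have p4 := psum 4 (by norm_num)
  -- Step 4: each a j ∈ {0, 1}
  have sumzero : ∑ j, (a j)^2 * (a j - 1)^2 = 0 := by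
    have e1 : ∑ j, (a j)^2 * (a j - 1)^2
        = ∑ j, ((a j)^4 - 2*(a j)^3 + (a j)^2) := by
      apply Finset.sum_congr rfl
      intro j _
      ring
    rw [e1]
    rw [Finset.sum_add_distrib, Finset.sum_sub_distrib]
    have e2 : ∑ j, 2*(a j)^3 = 2 * ∑ j, (a j)^3 := by
      rw [Finset.mul_sum]
    rw [e2, p2, p3, p4]
    ring
  have mem01 : ∀ j : Fin (m+1), a j = 0 ∨ a j = 1 := by
    intro j
    have hz : (a j)^2 * (a j - 1)^2 = 0 := by
      have := (Finset.sum_eq_zero_iff_of_nonneg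
        (fun j _ => by positivity)).mp sumzero j (Finset.mem_univ j)
      exact this
    rcases mul_eq_zero.mp hz with h' | h'
    · left; exact pow_eq_zero_iff (by norm_num) |>.mp h'
    · right
      have := pow_eq_zero_iff (n := 2) (by norm_num) |>.mp h'
      linarith
  -- Step 5: exactly one coordinate is 1
  have hsum01 : ∑ j, a j = ∑ j : Fin (m+1), (if a j = 1 then (1:ℝ) else 0) := by
    apply Finset.sum_congr rfl
    intro j _
    rcases mem01 j with h' | h' <;> simp [h']
  rw [Finset.sum_boole] at hsum01
  have hcard : (Finset.univ.filter (fun j : Fin (m+1) => a j = 1)).card = 1 := by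
    have : ((Finset.univ.filter (fun j : Fin (m+1) => a j = 1)).card : ℝ) = 1 := by
      rw [← hsum01]; simpa using p1
    exact_mod_cast this
  obtain ⟨i, hi⟩ := Finset.card_eq_one.mp hcard
  refine ⟨i, funext fun j => ?_⟩
  have hmem : ∀ j : Fin (m+1), a j = 1 ↔ j = i := by
    intro j
    constructor
    · intro hj
      have : j ∈ Finset.univ.filter (fun j : Fin (m+1) => a j = 1) := by
        simp [hj]
      rw [hi] at this
      simpa using this
    · intro hj
      subst hj
      have : j ∈ Finset.univ.filter (fun j : Fin (m+1) => a j = 1) := by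
        rw [hi]; simp
      simpa using this
  by_cases hji : j = i
  · subst hji
    simp [(hmem j).mpr rfl]
  · rcases mem01 j with h' | h'
    · simp [hji, h']
    · exact absurd ((hmem j).mp h') hji
end
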